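/- arXiv:2410.02464 — 2 statements merged into one kernel-verified Lean document; each statement's English description precedes it below -/
import Mathlib

section
/- Let L be a timed language, K ∈ ℕ, and ≈ an L-preserving, K-monotonic equivalence on timed words of finite index. Then in the strict one-clock deterministic integer-reset timed automaton A_≈ built from ≈, for every timed word u there is a run from the initial configuration ([ε]_≈, 0) on u ending in the configuration ([u]_≈, c^K(u)). -/
open scoped NNReal Classical

namespace IRTA

/-- A timestamp is a finite sequence of non-negative reals. -/
abbrev Timestamp : Type := List ℝ≥0

/-- A timed word is a finite sequence of (delay, letter) pairs. -/
abbrev TimedWord (A : Type) : Type := List (ℝ≥0 × A)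

/-- Fractional part of a non-negative real. -/
noncomputable def fracPart (x : ℝ≥0) : ℝ≥0 := x - (⌊x⌋₊ : ℝ≥0)

/-- `x` is a natural-number value. -/
def IsNatVal (x : ℝ≥0) : Prop := ∃ m : ℕ, x = (m : ℝ≥0)

/-- Region equivalence `≡^K`. -/
def RegEq (K : ℕ) (x y : ℝ≥0) : Prop :=
  (⌊x⌋₊ = ⌊y⌋₊ ∧ (fracPart x = 0 ↔ fracPart y = 0)) ∨ ((K : ℝ≥0) < x ∧ (K : ℝ≥0) < y)

/-- One step of the (greedy) clock evolution: reset whenever the value is an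
integer between `0` and `K`. -/
noncomputable def resetStep (K : ℕ) (v : ℝ≥0) : ℝ≥0 :=
  if ∃ m : ℕ, m ≤ K ∧ v = (m : ℝ≥0) then 0 else v

/-- Auxiliary function computing `c^K` with accumulator `v`. -/
noncomputable def cKAux (K : ℕ) : ℝ≥0 → Timestamp → ℝ≥0
  | v, [] => v
  | v, t :: d => cKAux K (resetStep K (v + t)) d

/-- `c^K(d)`: the sum of the delays after the last integral position of `d`. -/
noncomputable def cK (K : ℕ) (d : Timestamp) : ℝ≥0 := cKAux K 0 d

/-- `c^K` of a timed word is `c^K` of its timestamp. -/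
noncomputable def cKW {A : Type} (K : ℕ) (w : TimedWord A) : ℝ≥0 :=
  cK K (w.map Prod.fst)

/-- `c^K_⊤` : `c^K` truncated at `K`. -/
noncomputable def cKTop {A : Type} (K : ℕ) (w : TimedWord A) : WithTop ℝ≥0 :=
  if cKW K w ≤ (K : ℝ≥0) then ((cKW K w : ℝ≥0) : WithTop ℝ≥0) else ⊤

/-! ### Clock constraints and one-clock timed automata -/

/-- Clock constraints `φ ::= x < m | m < x | x = m | φ ∧ φ`. -/
inductive CC : Type where
  | lt : ℕ → CC
  | gt : ℕ → CC
  | eq : ℕ → CC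
  | and : CC → CC → CC

/-- Satisfaction of a clock constraint by a clock value. -/
def CC.sat : CC → ℝ≥0 → Prop
  | .lt m, x => x < (m : ℝ≥0)
  | .gt m, x => (m : ℝ≥0) < x
  | .eq m, x => x = (m : ℝ≥0)
  | .and φ ψ, x => φ.sat x ∧ ψ.sat x

/-- The largest constant appearing in a clock constraint. -/
def CC.maxConst : CC → ℕ
  | .lt m => m
  | .gt m => m
  | .eq m => m
  | .and φ ψ => max φ.maxConst ψ.maxConst

/-- A transition of a one-clock timed automaton; `reset = true` means the
clock is reset (the `r = 0` case). -/
structure TTrans (Q A : Type) where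
  src : Q
  dst : Q
  lab : A
  guard : CC
  reset : Bool

/-- A one-clock timed automaton. -/
structure TA (A : Type) where
  Q : Type
  init : Q
  final : Set Q
  trans : Set (TTrans Q A)

/-- The automaton has finitely many states and transitions. -/
def TA.IsFinite {A : Type} (M : TA A) : Prop := Finite M.Q ∧ M.trans.Finite

/-- Runs of a one-clock timed automaton between configurations. -/
inductive Steps {A : Type} (M : TA A) : M.Q × ℝ≥0 → TimedWord A → M.Q × ℝ≥0 → Prop
  | nil (c : M.Q × ℝ≥0) : Steps M c [] c
  | cons {q : M.Q} {ν t : ℝ≥0} {a : A} {w : TimedWord A} {c : M.Q × ℝ≥0}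
      (θ : TTrans M.Q A) (hθ : θ ∈ M.trans) (hsrc : θ.src = q) (hlab : θ.lab = a)
      (hg : θ.guard.sat (ν + t))
      (hrest : Steps M (θ.dst, if θ.reset then 0 else ν + t) w c) :
      Steps M (q, ν) ((t, a) :: w) c

/-- The language of `M` from a given configuration. -/
def TA.LangFrom {A : Type} (M : TA A) (c : M.Q × ℝ≥0) : Set (TimedWord A) :=
  {w | ∃ q' : M.Q, ∃ ν' : ℝ≥0, Steps M c w (q', ν') ∧ q' ∈ M.final}

/-- The language of `M` (from the initial configuration). -/
def TA.Lang {A : Type} (M : TA A) : Set (TimedWord A) := M.LangFrom (M.init, 0)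

/-- Determinism: distinct transitions with the same source and letter have
disjoint guards. -/
def TA.Deterministic {A : Type} (M : TA A) : Prop :=
  ∀ θ₁ ∈ M.trans, ∀ θ₂ ∈ M.trans, θ₁ ≠ θ₂ → θ₁.src = θ₂.src → θ₁.lab = θ₂.lab →
    ∀ x : ℝ≥0, ¬ (θ₁.guard.sat x ∧ θ₂.guard.sat x)

/-- Completeness: every timed word admits a run from the initial configuration. -/
def TA.Complete {A : Type} (M : TA A) : Prop :=
  ∀ w : TimedWord A, ∃ c : M.Q × ℝ≥0, Steps M (M.init, 0) w c

/-- A 1-IRTA: every resetting transition has an equality guard. -/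
def TA.IsIRTA {A : Type} (M : TA A) : Prop :=
  ∀ θ ∈ M.trans, θ.reset = true → ∃ m : ℕ, θ.guard = CC.eq m

/-- Guards allowed in a strict 1-IRTA with constant `K`. -/
def StrictGuard (K : ℕ) (φ : CC) : Prop :=
  (∃ m : ℕ, φ = CC.eq m) ∨ (∃ m : ℕ, φ = CC.and (CC.gt m) (CC.lt (m + 1))) ∨ φ = CC.gt K

/-- Strictness with constant `K`: every guard is of one of the allowed forms
and a guard is an equality iff the transition resets. -/
def TA.IsStrict {A : Type} (M : TA A) (K : ℕ) : Prop :=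
  ∀ θ ∈ M.trans, StrictGuard K θ.guard ∧ ((∃ m : ℕ, θ.guard = CC.eq m) ↔ θ.reset = true)

/-- All constants appearing in guards are at most `K`. -/
def TA.MaxConstLE {A : Type} (M : TA A) (K : ℕ) : Prop :=
  ∀ θ ∈ M.trans, θ.guard.maxConst ≤ K

/-- `M` reaches the same control state on reading `u` and `v` from the initial
configuration. -/
def TA.SameState {A : Type} (M : TA A) (u v : TimedWord A) : Prop :=
  ∃ q : M.Q, ∃ ν ν' : ℝ≥0, Steps M (M.init, 0) u (q, ν) ∧ Steps M (M.init, 0) v (q, ν')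

/-- A `K`-acceptor. -/
def IsKAcceptor {A : Type} (M : TA A) (K : ℕ) : Prop :=
  M.IsFinite ∧ M.Complete ∧ M.Deterministic ∧ M.IsIRTA ∧ M.IsStrict K ∧ M.MaxConstLE K ∧
    ∀ u v : TimedWord A, M.SameState u v → RegEq K (cKW K u) (cKW K v)

/-! ### Equivalences on timed words -/

/-- `L`-preservation of a relation on timed words. -/
def LPreserving {A : Type} (L : Set (TimedWord A)) (r : TimedWord A → TimedWord A → Prop) :
    Prop :=
  ∀ u v : TimedWord A, r u v → (u ∈ L ↔ v ∈ L)

/-- `K`-monotonicity of a relation on timed words. -/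
def KMonotonic {A : Type} (K : ℕ) (r : TimedWord A → TimedWord A → Prop) : Prop :=
  ∀ u v : TimedWord A, r u v →
    RegEq K (cKW K u) (cKW K v) ∧
      ∀ (a : A) (t t' : ℝ≥0), RegEq K (cKW K u + t) (cKW K v + t') →
        r (u ++ [(t, a)]) (v ++ [(t', a)])

/-- Finite index: there are finitely many classes `{v | r u v}`. -/
def FiniteIndex {A : Type} (r : TimedWord A → TimedWord A → Prop) : Prop :=
  Set.Finite (Set.range fun u : TimedWord A => {v : TimedWord A | r u v})

/-! ### The rescaling maps -/

/-- The bijection `f_{λ→λ'}` of the open unit interval. -/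
noncomputable def fScale (lam lam' t : ℝ≥0) : ℝ≥0 :=
  if t ≤ lam then (lam' / lam) * t else lam' + ((1 - lam') / (1 - lam)) * (t - lam)

/-- The new delay `t'` computed from the current clock values `y, y'` and delay `t`. -/
noncomputable def tauStep (K : ℕ) (y y' t : ℝ≥0) : ℝ≥0 :=
  if (IsNatVal y ∧ IsNatVal y') ∨ ((K : ℝ≥0) < y ∧ (K : ℝ≥0) < y') then t
  else (⌊t⌋₊ : ℝ≥0) + fScale (1 - fracPart y) (1 - fracPart y') (fracPart t)

/-- Auxiliary rescaling map on timestamps, carrying the current clock values. -/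
noncomputable def tauAux (K : ℕ) : ℝ≥0 → ℝ≥0 → Timestamp → Timestamp
  | _, _, [] => []
  | y, y', t :: d =>
      tauStep K y y' t ::
        tauAux K (resetStep K (y + t)) (resetStep K (y' + tauStep K y y' t)) d

/-- The rescaling map `τ_{x→x'}` on timestamps. -/
noncomputable def tau (K : ℕ) (x x' : ℝ≥0) (d : Timestamp) : Timestamp :=
  tauAux K (resetStep K x) (resetStep K x') d

/-- Auxiliary rescaling map on timed words. -/
noncomputable def tauWAux {A : Type} (K : ℕ) : ℝ≥0 → ℝ≥0 → TimedWord A → TimedWord A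
  | _, _, [] => []
  | y, y', (t, a) :: w =>
      (tauStep K y y' t, a) ::
        tauWAux K (resetStep K (y + t)) (resetStep K (y' + tauStep K y y' t)) w

/-- The rescaling map `τ_{x→x'}` on timed words. -/
noncomputable def tauW {A : Type} (K : ℕ) (x x' : ℝ≥0) (w : TimedWord A) : TimedWord A :=
  tauWAux K (resetStep K x) (resetStep K x') w

/-! ### Residuals and the syntactic equivalence -/

/-- The residual language `u^{-1}L`. -/
def residual {A : Type} (L : Set (TimedWord A)) (u : TimedWord A) : Set (TimedWord A) :=
  {w : TimedWord A | u ++ w ∈ L}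

/-- The syntactic equivalence `≈^{L,K}`. -/
def ApproxLK {A : Type} (L : Set (TimedWord A)) (K : ℕ) (u v : TimedWord A) : Prop :=
  RegEq K (cKW K u) (cKW K v) ∧
    (tauW K (cKW K u) (cKW K v)) '' (residual L u) = residual L v

/-! ### The automaton built from a monotonic equivalence -/

/-- The region guard `φ([t])`. -/
noncomputable def phiOf (K : ℕ) (t : ℝ≥0) : CC :=
  if t ≤ (K : ℝ≥0) then
    (if IsNatVal t then CC.eq ⌊t⌋₊ else CC.and (CC.gt ⌊t⌋₊) (CC.lt (⌊t⌋₊ + 1)))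
  else CC.gt K

/-- The automaton `A_≈` built from an equivalence `s` on timed words. -/
noncomputable def Aapprox {A : Type} (L : Set (TimedWord A)) (K : ℕ)
    (s : Setoid (TimedWord A)) : TA A where
  Q := Quotient s
  init := Quotient.mk s ([] : TimedWord A)
  final := {q : Quotient s | ∃ u : TimedWord A, q = Quotient.mk s u ∧ u ∈ L}
  trans := {θ : TTrans (Quotient s) A |
    ∃ (u : TimedWord A) (a : A) (t : ℝ≥0),
      θ.src = Quotient.mk s u ∧ θ.dst = Quotient.mk s (u ++ [(t, a)]) ∧ θ.lab = a ∧
      θ.guard = phiOf K (cKW K u + t) ∧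
      (θ.reset = true ↔ ∃ m : ℕ, m ≤ K ∧ cKW K u + t = (m : ℝ≥0))}

/-! ### Half-integral and small words -/

/-- Every delay has fractional part `0` or `1/2`. -/
def HalfIntegral {A : Type} (w : TimedWord A) : Prop :=
  ∀ p ∈ w, fracPart p.1 = 0 ∨ fracPart p.1 = 1 / 2

/-- Every delay is `< K + 1`. -/
def SmallWord {A : Type} (K : ℕ) (w : TimedWord A) : Prop :=
  ∀ p ∈ w, p.1 < (K : ℝ≥0) + 1

/-- The delays of `Σ_K`: half-integral values `≤ K + 1/2`. -/
def IsSigmaK (K : ℕ) (t : ℝ≥0) : Prop :=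
  (fracPart t = 0 ∨ fracPart t = 1 / 2) ∧ t ≤ (K : ℝ≥0) + 1 / 2

/-- Words over `Σ_K` (small half-integral words). -/
def SigmaWord {A : Type} (K : ℕ) (w : TimedWord A) : Prop :=
  ∀ p ∈ w, IsSigmaK K p.1



/-! ### `K`-acceptors with their region representatives -/

/-- A `K`-acceptor bundled with the half-integral representative of the
unique region of each state. -/
structure KAcc (A : Type) (K : ℕ) where
  M : TA A
  acc : IsKAcceptor M K
  reg : M.Q → ℝ≥0
  regHalf : ∀ q : M.Q, fracPart (reg q) = 0 ∨ fracPart (reg q) = 1 / 2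
  regLe : ∀ q : M.Q, reg q ≤ (K : ℝ≥0) + 1 / 2
  regSpec : ∀ (w : TimedWord A) (q : M.Q) (x : ℝ≥0),
    Steps M (M.init, 0) w (q, x) → RegEq K x (reg q)

/-- The minimization equivalences `∼^i` on the states of a `K`-acceptor. -/
def simEq {A : Type} {K : ℕ} (B : KAcc A K) : ℕ → B.M.Q → B.M.Q → Prop
  | 0, p, q => B.reg p = B.reg q ∧ (p ∈ B.M.final ↔ q ∈ B.M.final)
  | i + 1, p, q => simEq B i p q ∧
      ∀ (t : ℝ≥0) (a : A), IsSigmaK K t →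
        ∀ θ₁ θ₂ : TTrans B.M.Q A, θ₁ ∈ B.M.trans → θ₂ ∈ B.M.trans →
          θ₁.src = p → θ₂.src = q → θ₁.lab = a → θ₂.lab = a →
          θ₁.guard = phiOf K t → θ₂.guard = phiOf K t →
          simEq B i θ₁.dst θ₂.dst

/-- The quotient automaton `B/∼^m`. -/
noncomputable def quotTA {A : Type} {K : ℕ} (B : KAcc A K) (m : ℕ) : TA A where
  Q := Quot (simEq B m)
  init := Quot.mk (simEq B m) B.M.init
  final := {c : Quot (simEq B m) | ∃ q ∈ B.M.final, c = Quot.mk (simEq B m) q}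
  trans := {θ : TTrans (Quot (simEq B m)) A |
    ∃ θ₀ ∈ B.M.trans,
      θ.src = Quot.mk (simEq B m) θ₀.src ∧ θ.dst = Quot.mk (simEq B m) θ₀.dst ∧
      θ.lab = θ₀.lab ∧ θ.guard = θ₀.guard ∧ θ.reset = θ₀.reset}

/-! ### Observation tables -/

/-- An observation table over `Σ_K`. -/
structure ObsTable (A : Type) (K : ℕ) where
  U1 : Set (TimedWord A)
  E : Set (TimedWord A)
  val : TimedWord A → TimedWord A → Bool
  U1fin : U1.Finite
  Efin : E.Finite
  U1sigma : ∀ u ∈ U1, SigmaWord K u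
  Esigma : ∀ e ∈ E, SigmaWord K e
  epsU1 : ([] : TimedWord A) ∈ U1
  prefixClosed : ∀ (u : TimedWord A) (x : ℝ≥0 × A), u ++ [x] ∈ U1 → u ∈ U1
  epsE : ([] : TimedWord A) ∈ E
  suffixClosed : ∀ (x : ℝ≥0 × A) (e : TimedWord A), x :: e ∈ E → e ∈ E

/-- The set `U2` of one-letter `Σ_K`-extensions of `U1`. -/
def obsU2 {A : Type} {K : ℕ} (T : ObsTable A K) : Set (TimedWord A) :=
  {w : TimedWord A | ∃ u ∈ T.U1, ∃ (t : ℝ≥0) (a : A), IsSigmaK K t ∧ w = u ++ [(t, a)]}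

/-- `R(u)`: the row of `u` (restricted to `E`) together with `c^K_⊤(u)`. -/
noncomputable def Rof {A : Type} {K : ℕ} (T : ObsTable A K) (u : TimedWord A) :
    ({e : TimedWord A // e ∈ T.E} → Bool) × WithTop ℝ≥0 :=
  (fun e => T.val u e.1, cKTop K u)

/-- The table is closed. -/
def ObsTable.Closed {A : Type} {K : ℕ} (T : ObsTable A K) : Prop :=
  ∀ w ∈ obsU2 T, ∃ u ∈ T.U1, Rof T w = Rof T u

/-- The table is consistent. -/
def ObsTable.Consistent {A : Type} {K : ℕ} (T : ObsTable A K) : Prop :=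
  ∀ u ∈ T.U1, ∀ w ∈ T.U1, Rof T u = Rof T w →
    ∀ (t : ℝ≥0) (a : A), IsSigmaK K t → Rof T (u ++ [(t, a)]) = Rof T (w ++ [(t, a)])

/-- The automaton `A_𝒯` induced by a (closed and consistent) observation table. -/
noncomputable def ATable {A : Type} {K : ℕ} (T : ObsTable A K) : TA A where
  Q := {f : ({e : TimedWord A // e ∈ T.E} → Bool) × WithTop ℝ≥0 // ∃ u ∈ T.U1, f = Rof T u}
  init := ⟨Rof T [], ⟨[], T.epsU1, rfl⟩⟩
  final := {q | ∃ u ∈ T.U1, q.1 = Rof T u ∧ T.val u [] = true}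
  trans := {θ | ∃ u ∈ T.U1, ∃ (t : ℝ≥0) (a : A), IsSigmaK K t ∧
      θ.src.1 = Rof T u ∧ θ.dst.1 = Rof T (u ++ [(t, a)]) ∧ θ.lab = a ∧
      θ.guard = phiOf K (cKW K u + t) ∧
      (θ.reset = true ↔ ∃ m : ℕ, m ≤ K ∧ cKW K u + t = (m : ℝ≥0))}

/-- A `K`-acceptor is consistent with the observation table `𝒯`. -/
def ConsistentWith {A : Type} {K : ℕ} (M : TA A) (T : ObsTable A K) : Prop :=
  ∀ w : TimedWord A, (w ∈ T.U1 ∨ w ∈ obsU2 T) → ∀ e ∈ T.E,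
    ∀ (q : M.Q) (ν : ℝ≥0), Steps M (M.init, 0) (w ++ e) (q, ν) →
      (q ∈ M.final ↔ T.val w e = true)

/-- Isomorphism of one-clock timed automata. -/
structure TAIso {A : Type} (M N : TA A) where
  toEquiv : M.Q ≃ N.Q
  init_eq : toEquiv M.init = N.init
  final_iff : ∀ q : M.Q, q ∈ M.final ↔ toEquiv q ∈ N.final
  trans_iff : ∀ θ : TTrans M.Q A,
    θ ∈ M.trans ↔
      (⟨toEquiv θ.src, toEquiv θ.dst, θ.lab, θ.guard, θ.reset⟩ : TTrans N.Q A) ∈ N.trans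

theorem cKAux_append (K : ℕ) (v : ℝ≥0) (d₁ d₂ : Timestamp) :
    cKAux K v (d₁ ++ d₂) = cKAux K (cKAux K v d₁) d₂ := by
  induction d₁ generalizing v with
  | nil => rfl
  | cons t d ih => exact ih _

theorem cKW_append_singleton {A : Type} (K : ℕ) (u : TimedWord A) (t : ℝ≥0) (a : A) :
    cKW K (u ++ [(t, a)]) = resetStep K (cKW K u + t) := by
  simp only [cKW, cK, List.map_append, cKAux_append]
  rfl

theorem phiOf_sat_self (K : ℕ) (x : ℝ≥0) : (phiOf K x).sat x := by
  unfold phiOf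
  split_ifs with hK hnat
  · obtain ⟨m, rfl⟩ := hnat
    simp [CC.sat]
  · refine ⟨lt_of_le_of_ne (Nat.floor_le zero_le) fun h => hnat ⟨⌊x⌋₊, h.symm⟩, ?_⟩
    show x < ((⌊x⌋₊ + 1 : ℕ) : ℝ≥0)
    exact_mod_cast Nat.lt_floor_add_one x
  · exact lt_of_not_ge hK

theorem Steps.append {A : Type} {M : TA A} {c₁ c₂ c₃ : M.Q × ℝ≥0} {w₁ w₂ : TimedWord A}
    (h₁ : Steps M c₁ w₁ c₂) (h₂ : Steps M c₂ w₂ c₃) : Steps M c₁ (w₁ ++ w₂) c₃ := by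
  induction h₁ with
  | nil => exact h₂
  | cons θ hθ hsrc hlab hg _ ih => exact .cons θ hθ hsrc hlab hg (ih h₂)

theorem Steps.single {A : Type} {M : TA A} (θ : TTrans M.Q A) (hθ : θ ∈ M.trans)
    {ν t : ℝ≥0} (hg : θ.guard.sat (ν + t)) :
    Steps M (θ.src, ν) [(t, θ.lab)] (θ.dst, if θ.reset then 0 else ν + t) :=
  .cons θ hθ rfl rfl hg (.nil _)

-- The transition fired is the one whose defining witness in `Aapprox` is `u` itself.
theorem Aapprox_steps_singleton {A : Type} (L : Set (TimedWord A)) (K : ℕ)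
    (s : Setoid (TimedWord A)) (u : TimedWord A) (t : ℝ≥0) (a : A) :
    Steps (Aapprox L K s) (Quotient.mk s u, cKW K u) [(t, a)]
      (Quotient.mk s (u ++ [(t, a)]), cKW K (u ++ [(t, a)])) := by
  let θ : TTrans (Quotient s) A :=
    ⟨Quotient.mk s u, Quotient.mk s (u ++ [(t, a)]), a, phiOf K (cKW K u + t),
      decide (∃ m : ℕ, m ≤ K ∧ cKW K u + t = (m : ℝ≥0))⟩
  have hθ : θ ∈ (Aapprox L K s).trans := ⟨u, a, t, rfl, rfl, rfl, rfl, decide_eq_true_iff⟩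
  have hclock : (if θ.reset then 0 else cKW K u + t) = cKW K (u ++ [(t, a)]) := by
    simp only [θ, decide_eq_true_eq, cKW_append_singleton, resetStep]
  have hrun :=
    Steps.single (M := Aapprox L K s) (ν := cKW K u) θ hθ (phiOf_sat_self K (cKW K u + t))
  rwa [hclock] at hrun

theorem statement1_general {A : Type} (L : Set (TimedWord A)) (K : ℕ)
    (s : Setoid (TimedWord A)) :
    ∀ u : TimedWord A,
      Steps (Aapprox L K s) ((Aapprox L K s).init, 0) u (Quotient.mk s u, cKW K u) := by
  intro u
  induction u using List.reverseRecOn with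
  | nil => exact .nil _
  | append_singleton u x ih => exact ih.append (Aapprox_steps_singleton L K s u x.1 x.2)

/-- in `A_≈`, every timed word `u` has a run from the initial
configuration to `([u]_≈, c^K(u))`. -/
theorem statement1 {A : Type} [Finite A] (L : Set (TimedWord A)) (K : ℕ)
    (s : Setoid (TimedWord A)) (hpres : LPreserving L s.r) (hmono : KMonotonic K s.r)
    (hfin : FiniteIndex s.r) :
    ∀ u : TimedWord A,
      Steps (Aapprox L K s) ((Aapprox L K s).init, 0) u (Quotient.mk s u, cKW K u) :=
  statement1_general L K s

end IRTA
end

section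
/- Let K ∈ ℕ and x, x' ∈ ℝ≥0 with x ≡^K x'. Then τ_{x→x'} : 𝕋 → 𝕋 is a bijection and its inverse is exactly τ_{x'→x}. -/
open scoped NNReal Classical

namespace IRTA

/-! Reading `d` letter by letter, `τ_{x→x'}` keeps the two current clock values `y ≡^K y'`
region equivalent: a delay `t` becomes `t'` with `y + t ≡^K y' + t'`, so both clocks are reset at
the same positions. Hence `τ_{x'→x}` sees the pair `(y', y)` when it reads `t'`, and since
`f_{λ'→λ}` inverts `f_{λ→λ'}` it returns `t`. -/

lemma natCast_floor_add_fracPart (x : ℝ≥0) : (⌊x⌋₊ : ℝ≥0) + fracPart x = x :=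
  add_tsub_cancel_of_le (Nat.floor_le zero_le)

lemma fracPart_lt_one (x : ℝ≥0) : fracPart x < 1 :=
  (tsub_lt_iff_left (Nat.floor_le zero_le)).mpr (Nat.lt_floor_add_one x)

lemma fracPart_eq_zero_iff {x : ℝ≥0} : fracPart x = 0 ↔ IsNatVal x := by
  refine ⟨fun h => ⟨⌊x⌋₊, ?_⟩, ?_⟩
  · rw [← natCast_floor_add_fracPart x, h, add_zero, Nat.floor_natCast]
  · rintro ⟨m, rfl⟩
    rw [fracPart, Nat.floor_natCast, tsub_self]

lemma floor_natCast_add {s : ℝ≥0} (N : ℕ) (hs : s < 1) : ⌊(N : ℝ≥0) + s⌋₊ = N :=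
  (Nat.floor_eq_iff zero_le).mpr ⟨le_self_add, add_lt_add_right hs _⟩

lemma fracPart_natCast_add {s : ℝ≥0} (N : ℕ) (hs : s < 1) :
    fracPart ((N : ℝ≥0) + s) = s := by
  rw [fracPart, floor_natCast_add N hs, add_tsub_cancel_left]

section RegEq

variable {K : ℕ} {x y : ℝ≥0}

lemma RegEq.refl (K : ℕ) (x : ℝ≥0) : RegEq K x x := Or.inl ⟨rfl, Iff.rfl⟩

lemma RegEq.symm (h : RegEq K x y) : RegEq K y x :=
  h.imp (fun h => ⟨h.1.symm, h.2.symm⟩) And.symm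

lemma regEq_natCast_add_of_lt_one (N : ℕ) {r r' : ℝ≥0} (hr : 0 < r) (hr' : 0 < r')
    (hr1 : r < 1) (hr1' : r' < 1) : RegEq K (N + r) (N + r') :=
  Or.inl ⟨by rw [floor_natCast_add N hr1, floor_natCast_add N hr1'], by
    simp only [fracPart_natCast_add N hr1, fracPart_natCast_add N hr1', hr.ne', hr'.ne']⟩

lemma regEq_natCast_add (N : ℕ) {r r' : ℝ≥0} (hr : 0 < r) (hr' : 0 < r')
    (hr2 : r < 2) (hr2' : r' < 2) (hlt : r < 1 ↔ r' < 1) (heq : r = 1 ↔ r' = 1) :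
    RegEq K (N + r) (N + r') := by
  rcases lt_trichotomy r 1 with h | rfl | h
  · exact regEq_natCast_add_of_lt_one N hr hr' h (hlt.mp h)
  · rw [← heq.mp rfl]
    exact RegEq.refl K _
  · have h' : 1 < r' :=
      lt_of_le_of_ne (not_lt.mp (hlt.not.mp h.not_gt)) (Ne.symm (heq.not.mp h.ne'))
    have hsplit : ∀ s : ℝ≥0, 1 < s → (N : ℝ≥0) + s = ((N + 1 : ℕ) : ℝ≥0) + (s - 1) :=
      fun s hs => by rw [Nat.cast_succ, add_assoc, add_tsub_cancel_of_le hs.le]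
    rw [hsplit r h, hsplit r' h']
    exact regEq_natCast_add_of_lt_one (N + 1) (tsub_pos_of_lt h) (tsub_pos_of_lt h')
      (tsub_lt_iff_left h.le |>.mpr (by rw [one_add_one_eq_two]; exact hr2))
      (tsub_lt_iff_left h'.le |>.mpr (by rw [one_add_one_eq_two]; exact hr2'))

lemma RegEq.resetStep (h : RegEq K x y) : RegEq K (resetStep K x) (resetStep K y) := by
  have hreset : ∀ {u v : ℝ≥0}, RegEq K u v → (∃ m : ℕ, m ≤ K ∧ u = m) →
      ∃ m : ℕ, m ≤ K ∧ v = m := by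
    rintro u v huv ⟨m, hm, rfl⟩
    rcases huv with ⟨hfl, hfr⟩ | ⟨hK, -⟩
    · obtain ⟨n, rfl⟩ := fracPart_eq_zero_iff.mp (hfr.mp (fracPart_eq_zero_iff.mpr ⟨m, rfl⟩))
      exact ⟨n, by simp_all⟩
    · exact absurd hK (by exact_mod_cast hm.not_gt)
  unfold IRTA.resetStep
  by_cases hx : ∃ m : ℕ, m ≤ K ∧ x = m
  · rw [if_pos hx, if_pos (hreset h hx)]
    exact RegEq.refl K 0
  · rw [if_neg hx, if_neg fun hy => hx (hreset h.symm hy)]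
    exact h

end RegEq

section fScale

variable {lam lam' s : ℝ≥0}

lemma fScale_of_le (hs : s ≤ lam) : fScale lam lam' s = lam' / lam * s := if_pos hs

lemma fScale_of_gt (hs : lam < s) :
    fScale lam lam' s = lam' + (1 - lam') / (1 - lam) * (s - lam) := if_neg hs.not_ge

lemma fScale_strictMono (h0 : 0 < lam) (h1 : lam < 1) (h0' : 0 < lam') (h1' : lam' < 1) :
    StrictMono (fScale lam lam') := by
  have hlow : 0 < lam' / lam := div_pos h0' h0
  have hhigh : 0 < (1 - lam') / (1 - lam) := div_pos (tsub_pos_of_lt h1') (tsub_pos_of_lt h1)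
  intro a b hab
  unfold fScale
  split_ifs with ha hb hb
  · exact mul_lt_mul_of_pos_left hab hlow
  · calc lam' / lam * a ≤ lam' / lam * lam := mul_le_mul_right ha _
      _ = lam' := div_mul_cancel₀ _ h0.ne'
      _ < _ := lt_add_of_pos_right _ (mul_pos hhigh (tsub_pos_of_lt (not_le.mp hb)))
  · exact absurd (hab.le.trans hb) ha
  · exact add_lt_add_right (mul_lt_mul_of_pos_left
      (tsub_lt_tsub_right_of_le (not_le.mp ha).le hab) hhigh) _

lemma fScale_self (h0 : 0 < lam) : fScale lam lam' lam = lam' := by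
  rw [fScale_of_le le_rfl, div_mul_cancel₀ _ h0.ne']

lemma fScale_one (h1 : lam < 1) (h1' : lam' < 1) : fScale lam lam' 1 = 1 := by
  rw [fScale_of_gt h1, div_mul_cancel₀ _ (tsub_pos_of_lt h1).ne',
    add_tsub_cancel_of_le h1'.le]

lemma fScale_fScale (h0 : 0 < lam) (h1 : lam < 1) (h0' : 0 < lam') (h1' : lam' < 1) :
    fScale lam' lam (fScale lam lam' s) = s := by
  have hmono := fScale_strictMono h0 h1 h0' h1'
  rcases le_or_gt s lam with hs | hs
  · have hv : fScale lam lam' s ≤ lam' := by simpa only [fScale_self h0] using hmono.monotone hs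
    rw [fScale_of_le hv, fScale_of_le hs, ← mul_assoc, div_mul_div_comm, mul_comm lam',
      div_self (mul_ne_zero h0.ne' h0'.ne'), one_mul]
  · have hv : lam' < fScale lam lam' s := by simpa only [fScale_self h0] using hmono hs
    rw [fScale_of_gt hv, fScale_of_gt hs, add_tsub_cancel_left,
      ← mul_assoc, div_mul_div_comm, mul_comm (1 - lam'),
      div_self (mul_ne_zero (tsub_pos_of_lt h1).ne' (tsub_pos_of_lt h1').ne'), one_mul,
      add_tsub_cancel_of_le hs.le]

lemma fScale_lt_one (h0 : 0 < lam) (h1 : lam < 1) (h0' : 0 < lam') (h1' : lam' < 1)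
    (hs : s < 1) : fScale lam lam' s < 1 :=
  fScale_one (lam' := lam') h1 h1' ▸ fScale_strictMono h0 h1 h0' h1' hs

end fScale

section tauStep

variable {K : ℕ} {y y' t : ℝ≥0}

lemma tauStep_of_isNatVal_or_gt (h : (IsNatVal y ∧ IsNatVal y') ∨ (K < y ∧ K < y')) :
    tauStep K y y' t = t := by
  rw [tauStep, if_pos h]

lemma tauStep_of_not_isNatVal_or_gt (h : ¬((IsNatVal y ∧ IsNatVal y') ∨ (K < y ∧ K < y'))) :
    tauStep K y y' t = ⌊t⌋₊ + fScale (1 - fracPart y) (1 - fracPart y') (fracPart t) := by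
  rw [tauStep, if_neg h]

lemma RegEq.floor_eq_and_fracPart_pos (h : RegEq K y y')
    (hc : ¬((IsNatVal y ∧ IsNatVal y') ∨ (K < y ∧ K < y'))) :
    ⌊y⌋₊ = ⌊y'⌋₊ ∧ 0 < fracPart y ∧ 0 < fracPart y' := by
  rcases h with ⟨hfl, hfr⟩ | hK
  · refine ⟨hfl, pos_iff_ne_zero.mpr fun h0 => hc ?_, pos_iff_ne_zero.mpr fun h0 => hc ?_⟩
    · exact Or.inl ⟨fracPart_eq_zero_iff.mp h0, fracPart_eq_zero_iff.mp (hfr.mp h0)⟩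
    · exact Or.inl ⟨fracPart_eq_zero_iff.mp (hfr.mpr h0), fracPart_eq_zero_iff.mp h0⟩
  · exact absurd (Or.inr hK) hc

lemma one_sub_fracPart_pos (x : ℝ≥0) : 0 < 1 - fracPart x := tsub_pos_of_lt (fracPart_lt_one x)

lemma one_sub_fracPart_lt_one {x : ℝ≥0} (hx : 0 < fracPart x) : 1 - fracPart x < 1 :=
  tsub_lt_self one_pos hx

lemma RegEq.tauStep_tauStep (h : RegEq K y y') : tauStep K y' y (tauStep K y y' t) = t := by
  by_cases hc : (IsNatVal y ∧ IsNatVal y') ∨ (K < y ∧ K < y')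
  · rw [tauStep_of_isNatVal_or_gt hc, tauStep_of_isNatVal_or_gt (hc.imp And.symm And.symm)]
  · obtain ⟨-, ha, hb⟩ := h.floor_eq_and_fracPart_pos hc
    have hs' := fScale_lt_one (one_sub_fracPart_pos y) (one_sub_fracPart_lt_one ha)
      (one_sub_fracPart_pos y') (one_sub_fracPart_lt_one hb) (fracPart_lt_one t)
    rw [tauStep_of_not_isNatVal_or_gt hc,
      tauStep_of_not_isNatVal_or_gt (mt (Or.imp And.symm And.symm) hc),
      floor_natCast_add _ hs', fracPart_natCast_add _ hs',
      fScale_fScale (one_sub_fracPart_pos y) (one_sub_fracPart_lt_one ha)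
        (one_sub_fracPart_pos y') (one_sub_fracPart_lt_one hb), natCast_floor_add_fracPart]

/-- `f_{λ→λ'}` sends `[0, 1 - {y})` onto `[0, 1 - {y'})` and `1 - {y}` to `1 - {y'}`, so `y + t`
and `y' + t'` reach the next integer together. -/
lemma regEq_add_natCast_floor_add_fScale (hfl : ⌊y⌋₊ = ⌊y'⌋₊) (ha : 0 < fracPart y)
    (hb : 0 < fracPart y') :
    RegEq K (y + t) (y' + (⌊t⌋₊ + fScale (1 - fracPart y) (1 - fracPart y') (fracPart t))) := by
  set s' := fScale (1 - fracPart y) (1 - fracPart y') (fracPart t)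
  have hmono := fScale_strictMono (one_sub_fracPart_pos y) (one_sub_fracPart_lt_one ha)
    (one_sub_fracPart_pos y') (one_sub_fracPart_lt_one hb)
  have hs' : s' < 1 := fScale_lt_one (one_sub_fracPart_pos y) (one_sub_fracPart_lt_one ha)
    (one_sub_fracPart_pos y') (one_sub_fracPart_lt_one hb) (fracPart_lt_one t)
  have hy : y + t = (⌊y⌋₊ + ⌊t⌋₊ : ℕ) + (fracPart y + fracPart t) := by
    conv_lhs => rw [← natCast_floor_add_fracPart y, ← natCast_floor_add_fracPart t]
    push_cast; ring
  have hy' : y' + (⌊t⌋₊ + s') = (⌊y⌋₊ + ⌊t⌋₊ : ℕ) + (fracPart y' + s') := by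
    conv_lhs => rw [← natCast_floor_add_fracPart y', ← hfl]
    push_cast; ring
  have hlt_two : ∀ {a b : ℝ≥0}, a < 1 → b < 1 → a + b < 2 := fun ha hb =>
    one_add_one_eq_two (R := ℝ≥0) ▸ add_lt_add ha hb
  have hsum_eq_one : ∀ {a b : ℝ≥0}, a < 1 → (a + b = 1 ↔ b = 1 - a) := fun ha => by
    rw [eq_tsub_iff_add_eq_of_le ha.le, add_comm]
  rw [hy, hy']
  refine regEq_natCast_add _ (add_pos_of_pos_of_nonneg ha zero_le)
    (add_pos_of_pos_of_nonneg hb zero_le) (hlt_two (fracPart_lt_one y) (fracPart_lt_one t))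
    (hlt_two (fracPart_lt_one y') hs') ?_ ?_
  · rw [← lt_tsub_iff_left, ← lt_tsub_iff_left, ← hmono.lt_iff_lt,
      fScale_self (one_sub_fracPart_pos y)]
  · rw [hsum_eq_one (fracPart_lt_one y), hsum_eq_one (fracPart_lt_one y'),
      ← hmono.injective.eq_iff, fScale_self (one_sub_fracPart_pos y)]

lemma RegEq.add_tauStep (h : RegEq K y y') : RegEq K (y + t) (y' + tauStep K y y' t) := by
  have habove : K < y ∧ K < y' → RegEq K (y + t) (y' + t) := fun hK =>
    Or.inr ⟨hK.1.trans_le le_self_add, hK.2.trans_le le_self_add⟩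
  by_cases hc : (IsNatVal y ∧ IsNatVal y') ∨ (K < y ∧ K < y')
  · rw [tauStep_of_isNatVal_or_gt hc]
    rcases h with ⟨hfl, -⟩ | hK
    · rcases hc with ⟨⟨m, rfl⟩, ⟨n, rfl⟩⟩ | hK
      · rw [show m = n by simpa using hfl]
        exact RegEq.refl K _
      · exact habove hK
    · exact habove hK
  · obtain ⟨hfl, ha, hb⟩ := h.floor_eq_and_fracPart_pos hc
    rw [tauStep_of_not_isNatVal_or_gt hc]
    exact regEq_add_natCast_floor_add_fScale hfl ha hb

end tauStep

lemma tauAux_tauAux {K : ℕ} :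
    ∀ (d : Timestamp) {y y' : ℝ≥0}, RegEq K y y' → tauAux K y' y (tauAux K y y' d) = d
  | [], _, _, _ => rfl
  | t :: d, _, _, h => by
    rw [tauAux, tauAux, h.tauStep_tauStep, tauAux_tauAux d h.add_tauStep.resetStep]

/-- `τ_{x→x'}` is a bijection with inverse `τ_{x'→x}`. -/
theorem statement5 (K : ℕ) (x x' : ℝ≥0) (h : RegEq K x x') :
    Function.Bijective (tau K x x') ∧
      Function.LeftInverse (tau K x' x) (tau K x x') ∧
      Function.RightInverse (tau K x' x) (tau K x x') := by
  have hleft : Function.LeftInverse (tau K x' x) (tau K x x') :=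
    fun d => tauAux_tauAux d h.resetStep
  have hright : Function.RightInverse (tau K x' x) (tau K x x') :=
    fun d => tauAux_tauAux d h.symm.resetStep
  exact ⟨⟨hleft.injective, hright.surjective⟩, hleft, hright⟩

end IRTA
end
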